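/- arXiv:1912.08779 — 2 statements merged into one kernel-verified Lean document; each statement's English description precedes it below -/
import Mathlib

section
/- Let c_1 > c_2 > ... > c_s > 1 = c_{s+1} = ... = c_n be positive integers with c_1,...,c_s pairwise coprime, and let S = k[x_1,...,x_n] be graded by wt(x_i) = c_i. For the degree d = q·(c_1···c_s) partial Fermat count: the number M_{s+1} of degree D := Σ_{i=1}^n (d - 2c_i) + 1 monomials divisible by x_n^{d-1} but not by any x_j^{d/c_j - 1} for j ≠ n equals ∏_{j=1}^{n-1} (d/c_j - 1). -/
/-!
Since `x_n` has weight one, a monomial of degree `D` is determined by its exponents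
`a_1, …, a_{n-1}`, with `a_n = D - Σ_{j<n} c_j a_j`. The bounds `a_j ≤ d/c_j - 2` give
`Σ_{j<n} c_j a_j ≤ Σ_{j<n} (d - 2c_j) = D - (d - 1)`, so divisibility by `x_n^{d-1}` is automatic
and the monomials counted are exactly the points of the box `∏_{j<n} [0, d/c_j - 1)`.
-/

open Finset

theorem Nat.mul_sub_div_le_sub_mul (c d k : ℕ) : c * (d / c - k) ≤ d - k * c := by
  rw [Nat.mul_sub, mul_comm c k]
  exact Nat.sub_le_sub_right (Nat.mul_div_le d c) _

section WeightedFiber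

variable {ι : Type*} [Fintype ι] [DecidableEq ι] (w : ι → ℕ) {L : ι} (m : ι → ℕ) (N t : ℕ)

theorem sum_mul_eq_add_sum_erase (hL : w L = 1) (a : ι → ℕ) :
    ∑ i, w i * a i = a L + ∑ j ∈ univ.erase L, w j * a j := by
  rw [← add_sum_erase _ _ (mem_univ L), hL, one_mul]

theorem sum_erase_mul_le_of_lt {a : ι → ℕ} (ha : ∀ j, j ≠ L → a j < m j) :
    ∑ j ∈ univ.erase L, w j * a j ≤ ∑ j ∈ univ.erase L, w j * (m j - 1) :=
  sum_le_sum fun j hj ↦ Nat.mul_le_mul_left _ (by have := ha j (ne_of_mem_erase hj); omega)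

def completeAt (b : (j : {j // j ≠ L}) → Fin (m j)) : ι → ℕ := fun i ↦
  if h : i = L then N - ∑ j ∈ univ.erase L, w j * (if h' : j = L then 0 else (b ⟨j, h'⟩ : ℕ))
  else b ⟨i, h⟩

variable {w m N}

theorem completeAt_of_ne (b : (j : {j // j ≠ L}) → Fin (m j)) {i : ι} (hi : i ≠ L) :
    completeAt w m N b i = b ⟨i, hi⟩ := dif_neg hi

theorem sum_erase_mul_completeAt (b : (j : {j // j ≠ L}) → Fin (m j)) :
    ∑ j ∈ univ.erase L, w j * completeAt w m N b j =
      ∑ j ∈ univ.erase L, w j * (if h' : j = L then 0 else (b ⟨j, h'⟩ : ℕ)) :=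
  sum_congr rfl fun j hj ↦ by
    rw [completeAt_of_ne b (ne_of_mem_erase hj), dif_neg (ne_of_mem_erase hj)]

theorem completeAt_self (b : (j : {j // j ≠ L}) → Fin (m j)) :
    completeAt w m N b L = N - ∑ j ∈ univ.erase L, w j * completeAt w m N b j := by
  rw [sum_erase_mul_completeAt]
  exact dif_pos rfl

theorem completeAt_lt (b : (j : {j // j ≠ L}) → Fin (m j)) :
    ∀ j, j ≠ L → completeAt w m N b j < m j := fun j hj ↦ by
  rw [completeAt_of_ne b hj]; exact (b _).2

theorem sum_erase_mul_completeAt_le (b : (j : {j // j ≠ L}) → Fin (m j)) :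
    ∑ j ∈ univ.erase L, w j * completeAt w m N b j ≤ ∑ j ∈ univ.erase L, w j * (m j - 1) :=
  sum_erase_mul_le_of_lt w m (completeAt_lt b)

variable {t}

def weightedFiberEquivBox (hL : w L = 1) (h : t + ∑ j ∈ univ.erase L, w j * (m j - 1) ≤ N) :
    {a : ι → ℕ // ∑ i, w i * a i = N ∧ t ≤ a L ∧ ∀ j, j ≠ L → a j < m j} ≃
      ((j : {j // j ≠ L}) → Fin (m j)) where
  toFun a j := ⟨a.1 j, a.2.2.2 j j.2⟩
  invFun b :=
    ⟨completeAt w m N b,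
      by have := sum_erase_mul_completeAt_le (w := w) (N := N) b
         rw [sum_mul_eq_add_sum_erase w hL, completeAt_self]; omega,
      by have := sum_erase_mul_completeAt_le (w := w) (N := N) b
         rw [completeAt_self]; omega,
      completeAt_lt b⟩
  left_inv := by
    rintro ⟨a, hsum, -, hlt⟩
    set b : (j : {j // j ≠ L}) → Fin (m j) := fun j ↦ ⟨a j, hlt j j.2⟩
    have hoff : ∀ j, j ≠ L → completeAt w m N b j = a j := fun j hj ↦ completeAt_of_ne b hj
    ext i
    change completeAt w m N b i = a i
    by_cases hi : i = L
    · rw [hi, completeAt_self, sum_congr rfl fun j hj ↦ by rw [hoff j (ne_of_mem_erase hj)],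
        ← hsum, sum_mul_eq_add_sum_erase w hL, Nat.add_sub_cancel]
    · exact hoff i hi
  right_inv b := funext fun j ↦ Fin.ext (completeAt_of_ne b j.2)

theorem card_weightedFiber (hL : w L = 1) (h : t + ∑ j ∈ univ.erase L, w j * (m j - 1) ≤ N) :
    Nat.card {a : ι → ℕ // ∑ i, w i * a i = N ∧ t ≤ a L ∧ ∀ j, j ≠ L → a j < m j} =
      ∏ j ∈ univ.erase L, m j := by
  rw [Nat.card_congr (weightedFiberEquivBox hL h), Nat.card_pi]
  simp only [Nat.card_eq_fintype_card, Fintype.card_fin]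
  exact (prod_subtype _ (fun _ ↦ mem_erase.trans (and_iff_left (mem_univ _))) m).symm

end WeightedFiber

theorem stmt3_general (n s : ℕ) (hs : s ≤ n) (c : Fin (n + 1) → ℕ)
    (hone : ∀ i : Fin (n + 1), s ≤ (i : ℕ) → c i = 1)
    (d : ℕ)
    (hd2 : ∀ i, 2 * c i ≤ d)
    (D : ℕ) (hD : D = (∑ i, (d - 2 * c i)) + 1) :
    Nat.card {a : Fin (n + 1) → ℕ //
        (∑ i, c i * a i = D) ∧
        d - 1 ≤ a (Fin.last n) ∧
        ∀ j : Fin (n + 1), j ≠ Fin.last n → a j < d / c j - 1} =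
      ∏ j ∈ Finset.univ.erase (Fin.last n), (d / c j - 1) := by
  have hcL : c (Fin.last n) = 1 := hone _ (by rwa [Fin.val_last])
  have hd : 2 ≤ d := by simpa [hcL] using hd2 (Fin.last n)
  refine card_weightedFiber hcL ?_
  have hbox : ∑ j ∈ univ.erase (Fin.last n), c j * (d / c j - 1 - 1) ≤
      ∑ j ∈ univ.erase (Fin.last n), (d - 2 * c j) :=
    sum_le_sum fun j _ ↦ Nat.mul_sub_div_le_sub_mul (c j) d 2
  have hDsplit : D = d - 1 + ∑ j ∈ univ.erase (Fin.last n), (d - 2 * c j) := by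
    rw [hD, ← add_sum_erase _ _ (mem_univ _), hcL]; omega
  omega

/-- Weighted monomial count for the partial Fermat: with weights
`c 0 > c 1 > ... > c (s-1) > 1 = c s = ... = c n` (indices in `Fin (n+1)`, the first `s`
weights pairwise coprime and `> 1`, the rest equal to `1`), `d = q·(c_1 ⋯ c_s)`,
`D = Σ_i (d - 2 c_i) + 1`, the number of degree-`D` monomials divisible by
`x_n^{d-1}` but not divisible by any `x_j^{d/c_j - 1}` for `j ≠ n` equals
`∏_{j ≠ n} (d/c_j - 1)`. -/
theorem stmt3 (n s : ℕ) (hs : s ≤ n) (c : Fin (n + 1) → ℕ)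
    (hdec : ∀ i j : Fin (n + 1), i < j → (j : ℕ) < s → c j < c i)
    (hgt1 : ∀ i : Fin (n + 1), (i : ℕ) < s → 1 < c i)
    (hone : ∀ i : Fin (n + 1), s ≤ (i : ℕ) → c i = 1)
    (hcop : ∀ i j : Fin (n + 1), (i : ℕ) < s → (j : ℕ) < s → i ≠ j →
      Nat.Coprime (c i) (c j))
    (q d : ℕ) (hq : 0 < q)
    (hd : d = q * ∏ i ∈ Finset.univ.filter (fun i : Fin (n + 1) => (i : ℕ) < s), c i)
    (hd2 : ∀ i, 2 * c i ≤ d)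
    (D : ℕ) (hD : D = (∑ i, (d - 2 * c i)) + 1) :
    Nat.card {a : Fin (n + 1) → ℕ //
        (∑ i, c i * a i = D) ∧
        d - 1 ≤ a (Fin.last n) ∧
        ∀ j : Fin (n + 1), j ≠ Fin.last n → a j < d / c j - 1} =
      ∏ j ∈ Finset.univ.erase (Fin.last n), (d / c j - 1) :=
  stmt3_general n s hs c hone d hd2 D hD
end

section
/- Let F ∈ R[x_1,x_2,x_3,x_4] be quasihomogeneous of degree 6 for weights (3,2,1,1) with F mod t ≠ 0, written F = a(t)x_1^2 + b(t)x_2^3 + G with G ∈ (x_3,x_4). If for every N ≥ 1 the inequality (2 + 48/N^2)·mult_ρ(F) ≤ 2w_1 + 3w_2 + (32w_1 + 36w_2 + 60w_3 + 60w_4)/N^2 holds for ρ = (2,1,N,N) and ρ = (1,1,N,N), then a(0) ≠ 0 and b(0) ≠ 0. -/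
/-! Every monomial of `F` of weighted degree `6` other than `x₁²` and `x₂³` contains `x₃` or `x₄`,
so under `ρ = (p, q, N, N)` it acquires weight at least `N`, while `x₁²` and `x₂³` acquire
weights `2p` and `3q`. Hence if `t ∣ a`, every coefficient of `ρ·F` for `ρ = (1, 1, N, N)` is
divisible by `t³`, and if `t ∣ b`, every coefficient for `ρ = (2, 1, N, N)` is divisible by `t⁴`.
A coefficient of `F` prime to `t` keeps `mult_ρ(F)` finite, and the bounds `3` resp. `4`
contradict the assumed inequality at `N = 200`. -/

open MvPolynomial

/-- The action of the diagonal one-parameter subgroup `ρ` with weights `w`,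
substituting `x_i ↦ t^{w i} x_i`. -/
noncomputable def rhoAct {R : Type*} [CommRing R] {n : ℕ} (t : R) (w : Fin n → ℕ)
    (F : MvPolynomial (Fin n) R) : MvPolynomial (Fin n) R :=
  MvPolynomial.aeval (fun i => MvPolynomial.C (t ^ w i) * MvPolynomial.X i) F

/-- `mult_ρ(F)`: the largest `N` such that `ρ·F ∈ (t^N)`. -/
noncomputable def multRho {R : Type*} [CommRing R] {n : ℕ} (t : R) (w : Fin n → ℕ)
    (F : MvPolynomial (Fin n) R) : ℕ :=
  sSup {N : ℕ | ∀ d, t ^ N ∣ (rhoAct t w F).coeff d}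

section

variable {R σ : Type*} [CommRing R] {n : ℕ}

lemma rhoAct_monomial (t : R) (w : Fin n → ℕ) (d : Fin n →₀ ℕ) (c : R) :
    rhoAct t w (monomial d c) = monomial d (t ^ Finsupp.weight w d * c) := by
  rw [rhoAct, aeval_monomial, algebraMap_eq, monomial_eq, Finsupp.weight_apply]
  simp only [mul_pow, Finsupp.prod_mul, ← C_pow, ← pow_mul]
  rw [← map_finsuppProd C, Finsupp.prod, Finsupp.sum, ← Finset.prod_pow_eq_pow_sum, C_mul]
  simp only [smul_eq_mul, mul_comm]
  ring

lemma coeff_rhoAct (t : R) (w : Fin n → ℕ) (F : MvPolynomial (Fin n) R) (d : Fin n →₀ ℕ) :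
    (rhoAct t w F).coeff d = t ^ Finsupp.weight w d * F.coeff d := by
  induction F using MvPolynomial.induction_on' with
  | monomial e c =>
    rw [rhoAct_monomial, coeff_monomial, coeff_monomial]
    split_ifs with h <;> simp [h]
  | add p q hp hq =>
    simp only [rhoAct, map_add, coeff_add] at hp hq ⊢
    rw [hp, hq, mul_add]

lemma pow_dvd_coeff_rhoAct {t : R} {w : Fin n → ℕ} {F : MvPolynomial (Fin n) R}
    {d : Fin n →₀ ℕ} {m k : ℕ} (hm : m ≤ Finsupp.weight w d + k) (hk : t ^ k ∣ F.coeff d) :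
    t ^ m ∣ (rhoAct t w F).coeff d := by
  rw [coeff_rhoAct]
  exact (pow_dvd_pow t hm).trans (pow_add t _ k ▸ mul_dvd_mul_left _ hk)

lemma le_multRho [IsDomain R] {t : R} (ht : t ≠ 0) {w : Fin n → ℕ}
    {F : MvPolynomial (Fin n) R} {d₀ : Fin n →₀ ℕ} (hd₀ : ¬ t ∣ F.coeff d₀) {m : ℕ}
    (hm : ∀ d, t ^ m ∣ (rhoAct t w F).coeff d) : m ≤ multRho t w F := by
  refine le_csSup ⟨Finsupp.weight w d₀, fun N hN => ?_⟩ hm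
  by_contra! hlt
  have hdvd := (pow_dvd_pow t hlt).trans (hN d₀)
  rw [coeff_rhoAct, pow_succ, mul_dvd_mul_iff_left (pow_ne_zero _ ht)] at hdvd
  exact hd₀ hdvd

lemma coeff_eq_zero_of_mem_span_X_pair {G : MvPolynomial σ R}
    {i j : σ} (hG : G ∈ Ideal.span {X i, X j}) {d : σ →₀ ℕ} (hi : d i = 0) (hj : d j = 0) :
    G.coeff d = 0 := by
  classical
  obtain ⟨p, q, rfl⟩ := Ideal.mem_span_pair.mp hG
  rw [coeff_add, coeff_mul_X', coeff_mul_X', if_neg (by simpa using hi),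
    if_neg (by simpa using hj), add_zero]

lemma eq_single_of_isWeightedHomogeneous {F : MvPolynomial (Fin 4) R}
    (hhom : IsWeightedHomogeneous ![3, 2, 1, 1] F 6) {d : Fin 4 →₀ ℕ} (hd : F.coeff d ≠ 0)
    (h2 : d 2 = 0) (h3 : d 3 = 0) : d = Finsupp.single 0 2 ∨ d = Finsupp.single 1 3 := by
  have hdeg := hhom hd
  simp only [Finsupp.weight_eq_sum, Fin.sum_univ_four, smul_eq_mul, h2, h3,
    Matrix.cons_val_zero, Matrix.cons_val_one, Matrix.cons_val_two, Matrix.cons_val_three, Matrix.head_cons, Matrix.tail_cons] at hdeg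
  rcases (by omega : (d 0 = 2 ∧ d 1 = 0) ∨ (d 0 = 0 ∧ d 1 = 3)) with ⟨h0, h1⟩ | ⟨h0, h1⟩
  · left; ext i; fin_cases i <;> simp [h0, h1, h2, h3]
  · right; ext i; fin_cases i <;> simp [h0, h1, h2, h3]

lemma coeff_single_of_mem_span_X_two_X_three (a b : R) {G : MvPolynomial (Fin 4) R}
    (hG : G ∈ Ideal.span {X 2, X 3}) :
    (C a * X 0 ^ 2 + C b * X 1 ^ 3 + G).coeff (Finsupp.single 0 2) = a ∧
      (C a * X 0 ^ 2 + C b * X 1 ^ 3 + G).coeff (Finsupp.single 1 3) = b := by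
  have hcoeff (d : Fin 4 →₀ ℕ) (h2 : d 2 = 0) (h3 : d 3 = 0) :
      (C a * X 0 ^ 2 + C b * X 1 ^ 3 + G).coeff d = (if Finsupp.single 0 2 = d then a else 0)
        + if Finsupp.single 1 3 = d then b else 0 := by
    rw [coeff_add, coeff_add, C_mul_X_pow_eq_monomial, C_mul_X_pow_eq_monomial,
      coeff_monomial, coeff_monomial, coeff_eq_zero_of_mem_span_X_pair hG h2 h3, add_zero]
  constructor <;> rw [hcoeff _ (by simp) (by simp)] <;> simp [Finsupp.single_eq_single_iff]

lemma le_multRho_of_dvd_coeff [IsDomain R] {t : R} (ht : t ≠ 0) {F : MvPolynomial (Fin 4) R}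
    (hF : ∃ d, ¬ t ∣ F.coeff d) (hhom : IsWeightedHomogeneous ![3, 2, 1, 1] F 6)
    {p q N m i j : ℕ} (ha : t ^ i ∣ F.coeff (Finsupp.single 0 2))
    (hb : t ^ j ∣ F.coeff (Finsupp.single 1 3))
    (hma : m ≤ 2 * p + i) (hmb : m ≤ 3 * q + j) (hmN : m ≤ N) :
    m ≤ multRho t ![p, q, N, N] F := by
  obtain ⟨d₀, hd₀⟩ := hF
  refine le_multRho ht hd₀ fun d => ?_
  by_cases hc : F.coeff d = 0
  · simp [coeff_rhoAct, hc]
  by_cases h23 : d 2 = 0 ∧ d 3 = 0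
  · rcases eq_single_of_isWeightedHomogeneous hhom hc h23.1 h23.2 with rfl | rfl
    · exact pow_dvd_coeff_rhoAct (by simpa [Finsupp.weight_single, mul_comm] using hma) ha
    · exact pow_dvd_coeff_rhoAct (by simpa [Finsupp.weight_single, mul_comm] using hmb) hb
  · have hN : N ≤ Finsupp.weight ![p, q, N, N] d := by
      rcases not_and_or.mp h23 with h | h
      · exact Finsupp.le_weight_of_ne_zero' ![p, q, N, N] h
      · exact Finsupp.le_weight_of_ne_zero' ![p, q, N, N] h
    exact pow_dvd_coeff_rhoAct (k := 0) (by omega) (by simp)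

end

theorem stmt6_general {R : Type*} [CommRing R] [IsDomain R]
    (t : R) (ht : Irreducible t)
    (F G : MvPolynomial (Fin 4) R) (a b : R)
    (hhom : MvPolynomial.IsWeightedHomogeneous ![3, 2, 1, 1] F 6)
    (hF : ∃ d, ¬ t ∣ F.coeff d)
    (hdecomp : F = MvPolynomial.C a * MvPolynomial.X 0 ^ 2
        + MvPolynomial.C b * MvPolynomial.X 1 ^ 3 + G)
    (hG : G ∈ Ideal.span ({MvPolynomial.X 2, MvPolynomial.X 3} :
        Set (MvPolynomial (Fin 4) R)))
    (hineq : ∀ N : ℕ, 1 ≤ N →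
      ((2 + 48 / (N : ℚ) ^ 2) * (multRho t ![2, 1, N, N] F : ℚ) ≤
          2 * 2 + 3 * 1 + (32 * 2 + 36 * 1 + 60 * (N : ℚ) + 60 * (N : ℚ)) / (N : ℚ) ^ 2) ∧
      ((2 + 48 / (N : ℚ) ^ 2) * (multRho t ![1, 1, N, N] F : ℚ) ≤
          2 * 1 + 3 * 1 + (32 * 1 + 36 * 1 + 60 * (N : ℚ) + 60 * (N : ℚ)) / (N : ℚ) ^ 2)) :
    ¬ t ∣ a ∧ ¬ t ∣ b := by
  obtain ⟨ha, hb⟩ := hdecomp ▸ coeff_single_of_mem_span_X_two_X_three a b hG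
  have h200 := hineq 200 (by norm_num)
  norm_num at h200
  constructor
  · intro hta
    have hm : 3 ≤ multRho t ![1, 1, 200, 200] F :=
      le_multRho_of_dvd_coeff ht.ne_zero hF hhom (i := 1) (j := 0) (ha ▸ by simpa using hta)
        (by simp) le_rfl le_rfl (by norm_num)
    have : (3 : ℚ) ≤ multRho t ![1, 1, 200, 200] F := by exact_mod_cast hm
    linarith
  · intro htb
    have hm : 4 ≤ multRho t ![2, 1, 200, 200] F :=
      le_multRho_of_dvd_coeff ht.ne_zero hF hhom (i := 0) (j := 1) (by simp)
        (hb ▸ by simpa using htb) le_rfl le_rfl (by norm_num)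
    have : (4 : ℚ) ≤ multRho t ![2, 1, 200, 200] F := by exact_mod_cast hm
    linarith

/-- Let `F ∈ R[x₁,x₂,x₃,x₄]` be quasihomogeneous of degree `6` for weights
`(3,2,1,1)` with `F mod t ≠ 0`, written `F = a(t)x₁² + b(t)x₂³ + G` with `G ∈ (x₃,x₄)`.
If for every `N ≥ 1` the inequality
`(2 + 48/N²)·mult_ρ(F) ≤ 2w₁ + 3w₂ + (32w₁ + 36w₂ + 60w₃ + 60w₄)/N²` holds for
`ρ = (2,1,N,N)` and `ρ = (1,1,N,N)`, then `a(0) ≠ 0` and `b(0) ≠ 0`. -/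
theorem stmt6 {R : Type*} [CommRing R] [IsDomain R] [IsDiscreteValuationRing R]
    (t : R) (ht : Irreducible t)
    (F G : MvPolynomial (Fin 4) R) (a b : R)
    (hhom : MvPolynomial.IsWeightedHomogeneous ![3, 2, 1, 1] F 6)
    (hF : ∃ d, ¬ t ∣ F.coeff d)
    (hdecomp : F = MvPolynomial.C a * MvPolynomial.X 0 ^ 2
        + MvPolynomial.C b * MvPolynomial.X 1 ^ 3 + G)
    (hG : G ∈ Ideal.span ({MvPolynomial.X 2, MvPolynomial.X 3} :
        Set (MvPolynomial (Fin 4) R)))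
    (hineq : ∀ N : ℕ, 1 ≤ N →
      ((2 + 48 / (N : ℚ) ^ 2) * (multRho t ![2, 1, N, N] F : ℚ) ≤
          2 * 2 + 3 * 1 + (32 * 2 + 36 * 1 + 60 * (N : ℚ) + 60 * (N : ℚ)) / (N : ℚ) ^ 2) ∧
      ((2 + 48 / (N : ℚ) ^ 2) * (multRho t ![1, 1, N, N] F : ℚ) ≤
          2 * 1 + 3 * 1 + (32 * 1 + 36 * 1 + 60 * (N : ℚ) + 60 * (N : ℚ)) / (N : ℚ) ^ 2)) :
    ¬ t ∣ a ∧ ¬ t ∣ b :=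
  stmt6_general t ht F G a b hhom hF hdecomp hG hineq
end
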